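/- Let U, V in SpSt(2n,2k) with the relevant inverses well-defined: set A = 2((I + V^+U)^{-1} - (I + U^+V)^{-1}) and H = 2((V + U)(I + U^+V)^{-1} - U). Then (1/4)H^+H = (U^+V + I)^{-1} + (V^+U + I)^{-1} - I, and consequently (1/4)H^+H - (1/2)A + I = 2(U^+V + I)^{-1}. -/

import Mathlib

/-!
Write `P = (1 + U⁺V)⁻¹`. Since `⁺` is an anti-involution compatible with inverses, `P⁺ = (1 + V⁺U)⁻¹`,
so `H⁺/2 = P⁺(V⁺ + U⁺) - U⁺`. Expanding `(H⁺/2)(H/2)` with `U⁺U = V⁺V = 1` and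
`(V⁺ + U⁺)(V + U) = (1 + V⁺U) + (1 + U⁺V)` collapses it to `P + P⁺ - 1`; the second identity is
then linear in `P` and `P⁺`.
-/

open Matrix

noncomputable section

/-- The standard symplectic matrix `J = [[0, I],[-I, 0]]` of size `2m`. -/
def Jmat (m : ℕ) : Matrix (Fin m ⊕ Fin m) (Fin m ⊕ Fin m) ℝ :=
  Matrix.fromBlocks 0 1 (-1) 0

/-- The symplectic inverse `A⁺ = J₂ₖᵀ Aᵀ J₂ₙ` of a `2n × 2k` real matrix. -/
def sympInv {n k : ℕ} (A : Matrix (Fin n ⊕ Fin n) (Fin k ⊕ Fin k) ℝ) :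
    Matrix (Fin k ⊕ Fin k) (Fin n ⊕ Fin n) ℝ :=
  (Jmat k)ᵀ * Aᵀ * Jmat n

lemma Jmat_transpose (m : ℕ) : (Jmat m)ᵀ = -Jmat m := by
  simp [Jmat, fromBlocks_transpose, fromBlocks_neg]

lemma Jmat_mul_self (m : ℕ) : Jmat m * Jmat m = -1 := by
  simp [Jmat, fromBlocks_multiply, ← fromBlocks_one, fromBlocks_neg]

lemma Jmat_mul_transpose (m : ℕ) : Jmat m * (Jmat m)ᵀ = 1 := by
  rw [Jmat_transpose, mul_neg, Jmat_mul_self, neg_neg]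

lemma Jmat_transpose_mul (m : ℕ) : (Jmat m)ᵀ * Jmat m = 1 := by
  rw [Jmat_transpose, neg_mul, Jmat_mul_self, neg_neg]

lemma inv_Jmat (m : ℕ) : (Jmat m)⁻¹ = (Jmat m)ᵀ :=
  inv_eq_right_inv (Jmat_mul_transpose m)

lemma inv_transpose_Jmat (m : ℕ) : (Jmat m)ᵀ⁻¹ = Jmat m :=
  inv_eq_right_inv (Jmat_transpose_mul m)

section sympInv

variable {n k l : ℕ}

lemma sympInv_mul (A : Matrix (Fin n ⊕ Fin n) (Fin k ⊕ Fin k) ℝ)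
    (B : Matrix (Fin k ⊕ Fin k) (Fin l ⊕ Fin l) ℝ) :
    sympInv (A * B) = sympInv B * sympInv A := by
  simp only [sympInv, transpose_mul, Matrix.mul_assoc]
  rw [← Matrix.mul_assoc (Jmat k), Jmat_mul_transpose, Matrix.one_mul]

lemma sympInv_one : sympInv (1 : Matrix (Fin k ⊕ Fin k) (Fin k ⊕ Fin k) ℝ) = 1 := by
  simp [sympInv, Jmat_transpose_mul]

lemma sympInv_add (A B : Matrix (Fin n ⊕ Fin n) (Fin k ⊕ Fin k) ℝ) :
    sympInv (A + B) = sympInv A + sympInv B := by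
  simp [sympInv, Matrix.add_mul, Matrix.mul_add]

lemma sympInv_sub (A B : Matrix (Fin n ⊕ Fin n) (Fin k ⊕ Fin k) ℝ) :
    sympInv (A - B) = sympInv A - sympInv B := by
  simp [sympInv, Matrix.sub_mul, Matrix.mul_sub]

lemma sympInv_smul {R : Type*} [Monoid R] [DistribMulAction R ℝ] [IsScalarTower R ℝ ℝ]
    [SMulCommClass R ℝ ℝ]
    (c : R) (A : Matrix (Fin n ⊕ Fin n) (Fin k ⊕ Fin k) ℝ) :
    sympInv (c • A) = c • sympInv A := by
  rw [sympInv, sympInv, transpose_smul, Matrix.mul_smul, Matrix.smul_mul]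

lemma sympInv_sympInv (A : Matrix (Fin n ⊕ Fin n) (Fin k ⊕ Fin k) ℝ) :
    sympInv (sympInv A) = A := by
  simp only [sympInv, transpose_mul, transpose_transpose, Matrix.mul_assoc]
  rw [Jmat_mul_self, ← Matrix.mul_assoc, Jmat_transpose, neg_mul_neg, Jmat_mul_self]
  simp

lemma sympInv_nonsing_inv (M : Matrix (Fin k ⊕ Fin k) (Fin k ⊕ Fin k) ℝ) :
    sympInv M⁻¹ = (sympInv M)⁻¹ := by
  rw [sympInv, sympInv, Matrix.mul_inv_rev, Matrix.mul_inv_rev, inv_Jmat, inv_transpose_Jmat,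
    transpose_nonsing_inv, Matrix.mul_assoc]

lemma sympInv_mul_add_sympInv_mul (U V : Matrix (Fin n ⊕ Fin n) (Fin k ⊕ Fin k) ℝ)
    (hU : sympInv U * U = 1) (hV : sympInv V * V = 1) :
    (sympInv V + sympInv U) * (V + U) = (1 + sympInv V * U) + (1 + sympInv U * V) := by
  rw [Matrix.add_mul, Matrix.mul_add, Matrix.mul_add, hU, hV]
  abel

lemma sympInv_mul_self_add_mul_inv_sub (U V : Matrix (Fin n ⊕ Fin n) (Fin k ⊕ Fin k) ℝ)
    (hU : sympInv U * U = 1) (hV : sympInv V * V = 1) (h : IsUnit (1 + sympInv U * V)) :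
    let G := (V + U) * (1 + sympInv U * V)⁻¹ - U
    sympInv G * G = (1 + sympInv U * V)⁻¹ + (1 + sympInv V * U)⁻¹ - 1 := by
  intro G
  set P := (1 + sympInv U * V)⁻¹
  set Q := (1 + sympInv V * U)⁻¹
  have hP : (1 + sympInv U * V) * P = 1 :=
    mul_nonsing_inv _ ((isUnit_iff_isUnit_det _).mp h)
  have hQ_sympInv : sympInv P = Q := by
    rw [sympInv_nonsing_inv, sympInv_add, sympInv_one, sympInv_mul, sympInv_sympInv]
  have hQ : Q * (1 + sympInv V * U) = 1 := by
    have := congrArg sympInv hP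
    rwa [sympInv_mul, hQ_sympInv, sympInv_add, sympInv_one, sympInv_mul, sympInv_sympInv] at this
  have hG : sympInv G = Q * (sympInv V + sympInv U) - sympInv U := by
    rw [sympInv_sub, sympInv_mul, hQ_sympInv, sympInv_add]
  have hVU := sympInv_mul_add_sympInv_mul U V hU hV
  have cross : Q * (sympInv V + sympInv U) * ((V + U) * P) = P + Q := by
    rw [Matrix.mul_assoc, ← Matrix.mul_assoc (sympInv V + sympInv U), hVU, Matrix.add_mul,
      Matrix.mul_add, hP, ← Matrix.mul_assoc, hQ, Matrix.one_mul, Matrix.mul_one]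
  have left : Q * (sympInv V + sympInv U) * U = 1 := by
    rw [Matrix.mul_assoc, Matrix.add_mul, hU, add_comm, hQ]
  have right : sympInv U * ((V + U) * P) = 1 := by
    rw [← Matrix.mul_assoc, Matrix.mul_add, hU, add_comm, hP]
  rw [hG, Matrix.sub_mul, Matrix.mul_sub, Matrix.mul_sub, cross, left, right, hU]
  abel

end sympInv

theorem stmt_13_general (n k : ℕ) (U V : Matrix (Fin n ⊕ Fin n) (Fin k ⊕ Fin k) ℝ)
    (hU : sympInv U * U = 1) (hV : sympInv V * V = 1)
    (h1 : IsUnit (1 + sympInv U * V))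
    (A : Matrix (Fin k ⊕ Fin k) (Fin k ⊕ Fin k) ℝ)
    (hA : A = 2 • ((1 + sympInv V * U)⁻¹ - (1 + sympInv U * V)⁻¹))
    (H : Matrix (Fin n ⊕ Fin n) (Fin k ⊕ Fin k) ℝ)
    (hH : H = 2 • ((V + U) * (1 + sympInv U * V)⁻¹ - U)) :
    (1/4 : ℝ) • (sympInv H * H)
        = (sympInv U * V + 1)⁻¹ + (sympInv V * U + 1)⁻¹ - 1 ∧
    (1/4 : ℝ) • (sympInv H * H) - (1/2 : ℝ) • A + 1 = 2 • (sympInv U * V + 1)⁻¹ := by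
  have hHH : (1/4 : ℝ) • (sympInv H * H)
      = (sympInv U * V + 1)⁻¹ + (sympInv V * U + 1)⁻¹ - 1 := by
    rw [hH, sympInv_smul, Matrix.smul_mul, Matrix.mul_smul,
      sympInv_mul_self_add_mul_inv_sub U V hU hV h1, add_comm (sympInv U * V), add_comm (sympInv V * U)]
    module
  refine ⟨hHH, ?_⟩
  rw [hHH, hA, add_comm (sympInv U * V), add_comm (sympInv V * U)]
  module

theorem stmt_13 (n k : ℕ) (U V : Matrix (Fin n ⊕ Fin n) (Fin k ⊕ Fin k) ℝ)
    (hU : sympInv U * U = 1) (hV : sympInv V * V = 1)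
    (h1 : IsUnit (1 + sympInv U * V)) (h2 : IsUnit (1 + sympInv V * U))
    (A : Matrix (Fin k ⊕ Fin k) (Fin k ⊕ Fin k) ℝ)
    (hA : A = 2 • ((1 + sympInv V * U)⁻¹ - (1 + sympInv U * V)⁻¹))
    (H : Matrix (Fin n ⊕ Fin n) (Fin k ⊕ Fin k) ℝ)
    (hH : H = 2 • ((V + U) * (1 + sympInv U * V)⁻¹ - U)) :
    (1/4 : ℝ) • (sympInv H * H)
        = (sympInv U * V + 1)⁻¹ + (sympInv V * U + 1)⁻¹ - 1 ∧
    (1/4 : ℝ) • (sympInv H * H) - (1/2 : ℝ) • A + 1 = 2 • (sympInv U * V + 1)⁻¹ :=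
  stmt_13_general n k U V hU hV h1 A hA H hH
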